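/- Let M be a loopless matroid of rank r on [n], let 𝓖 be a building set in the lattice of flats L_M, and let S be a subset of 𝓖 ∪ {[n]} containing [n] that is nested with respect to the building set 𝓖 ∪ {[n]}. For G ∈ S let F_{<G} denote the closure of the union of those members of S that are properly contained in G (the closure of the empty union being ∅). Let w = Σ_{G∈S, G≠[n]} c_G e_G with all c_G > 0. Then a basis σ of M is w-maximal if and only if for every G ∈ S the set (σ ∩ G) ∖ F_{<G} is a basis of the minor (M|G)/F_{<G}; that is, M_w is the direct sum of the matroids (M|G)/F_{<G}, G ∈ S. -/

import Mathlib

open Finset Pointwise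

/-- The 0/1 indicator vector (in `ℝ^n`) of a finite set of coordinates. -/
def indVec {n : ℕ} (S : Finset (Fin n)) : Fin n → ℝ := fun i => if i ∈ S then 1 else 0

/-- Independence with respect to a family `𝔅` of bases: being contained in a basis. -/
def FamIndep {n : ℕ} (𝔅 : Finset (Finset (Fin n))) (I : Finset (Fin n)) : Prop :=
  ∃ B ∈ 𝔅, I ⊆ B

/-- Circuits of the family `𝔅`: minimal dependent sets. -/
def FamCircuit {n : ℕ} (𝔅 : Finset (Finset (Fin n))) (C : Finset (Fin n)) : Prop :=
  ¬ FamIndep 𝔅 C ∧ ∀ D ⊂ C, FamIndep 𝔅 D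

open scoped Classical in
/-- The rank of a set: maximal cardinality of an independent subset. -/
noncomputable def famRk {n : ℕ} (𝔅 : Finset (Finset (Fin n))) (F : Finset (Fin n)) : ℕ :=
  (F.powerset.filter (fun I => FamIndep 𝔅 I)).sup Finset.card

open scoped Classical in
/-- The bases of the restriction to `F`: the maximal independent subsets of `F`. -/
noncomputable def famRestrictBases {n : ℕ} (𝔅 : Finset (Finset (Fin n)))
    (F : Finset (Fin n)) : Finset (Finset (Fin n)) :=
  F.powerset.filter fun B =>
    FamIndep 𝔅 B ∧ ∀ B' ⊆ F, FamIndep 𝔅 B' → B ⊆ B' → B = B'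

open scoped Classical in
/-- The bases of the contraction by `F`: the sets `B \ F` where `B` is a basis meeting `F`
in a set of full rank `rk F`. -/
noncomputable def famContractBases {n : ℕ} (𝔅 : Finset (Finset (Fin n)))
    (F : Finset (Fin n)) : Finset (Finset (Fin n)) :=
  (𝔅.filter fun B => (B ∩ F).card = famRk 𝔅 F).image (· \ F)

/-- `i` and `j` are related if equal or contained in a common circuit. -/
def FamConnRel {n : ℕ} (𝔅 : Finset (Finset (Fin n))) (i j : Fin n) : Prop :=
  i = j ∨ ∃ C, FamCircuit 𝔅 C ∧ i ∈ C ∧ j ∈ C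

/-- Number of connected components: number of classes of the equivalence relation
generated by `FamConnRel`. -/
noncomputable def famNumComponents {n : ℕ} (𝔅 : Finset (Finset (Fin n))) : ℕ :=
  Nat.card (Quot (FamConnRel 𝔅))

/-- Connectedness of the matroid presented by bases `𝔅` on the ground set `E`:
any two distinct elements of `E` lie in a common circuit (within `E`). -/
def FamConnectedOn {n : ℕ} (𝔅 : Finset (Finset (Fin n))) (E : Finset (Fin n)) : Prop :=
  ∀ i ∈ E, ∀ j ∈ E, i ≠ j → ∃ C, C ⊆ E ∧ FamCircuit 𝔅 C ∧ i ∈ C ∧ j ∈ C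

/-- A matroid of rank `r` on the ground set `Fin n`, given by its collection of bases:
`r`-element sets satisfying the basis exchange axiom. -/
structure FinMatroid (n r : ℕ) where
  bases : Finset (Finset (Fin n))
  bases_nonempty : bases.Nonempty
  card_bases : ∀ B ∈ bases, B.card = r
  exchange : ∀ B₁ ∈ bases, ∀ B₂ ∈ bases, ∀ i ∈ B₁ \ B₂,
      ∃ j ∈ B₂ \ B₁, insert j (B₁.erase i) ∈ bases

namespace FinMatroid

variable {n r : ℕ}

def Indep (M : FinMatroid n r) (I : Finset (Fin n)) : Prop := FamIndep M.bases I

def IsCircuit (M : FinMatroid n r) (C : Finset (Fin n)) : Prop := FamCircuit M.bases C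

noncomputable def rk (M : FinMatroid n r) (F : Finset (Fin n)) : ℕ := famRk M.bases F

/-- A flat: no circuit leaves exactly one element outside `F`. -/
def IsFlat (M : FinMatroid n r) (F : Finset (Fin n)) : Prop :=
  ∀ C, M.IsCircuit C → (C \ F).card ≠ 1

open scoped Classical in
/-- Closure of a set: the intersection of all flats containing it (the smallest flat
containing it). -/
noncomputable def closure (M : FinMatroid n r) (S : Finset (Fin n)) : Finset (Fin n) :=
  Finset.univ.filter fun i => ∀ F, M.IsFlat F → S ⊆ F → i ∈ F

/-- No single element is dependent. -/
def Loopless (M : FinMatroid n r) : Prop := ∀ i : Fin n, M.Indep {i}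

noncomputable def numComponents (M : FinMatroid n r) : ℕ := famNumComponents M.bases

/-- Any two distinct elements lie in a common circuit. -/
def Connected (M : FinMatroid n r) : Prop :=
  ∀ i j : Fin n, i ≠ j → ∃ C, M.IsCircuit C ∧ i ∈ C ∧ j ∈ C

/-- `B` is a `w`-maximal basis of `M`. -/
def IsMaxBasis (M : FinMatroid n r) (w : Fin n → ℝ) (B : Finset (Fin n)) : Prop :=
  B ∈ M.bases ∧ ∀ B' ∈ M.bases, ∑ i ∈ B', w i ≤ ∑ i ∈ B, w i

open scoped Classical in
/-- The bases of the matroid `M_w`: the `w`-maximal bases of `M`. -/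
noncomputable def maxBases (M : FinMatroid n r) (w : Fin n → ℝ) :
    Finset (Finset (Fin n)) :=
  M.bases.filter fun B => ∀ B' ∈ M.bases, ∑ i ∈ B', w i ≤ ∑ i ∈ B, w i

/-- Membership in the Bergman fan: on every circuit the minimum of `w` is attained
at least twice. -/
def InBergmanFan (M : FinMatroid n r) (w : Fin n → ℝ) : Prop :=
  ∀ C, M.IsCircuit C → ∃ i ∈ C, ∃ j ∈ C, i ≠ j ∧ w i = w j ∧ ∀ k ∈ C, w i ≤ w k

/-- The matroid polytope: convex hull of the indicator vectors of the bases. -/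
noncomputable def polytope (M : FinMatroid n r) : Set (Fin n → ℝ) :=
  convexHull ℝ (indVec '' ↑M.bases)

noncomputable def restrictBases (M : FinMatroid n r) (F : Finset (Fin n)) :
    Finset (Finset (Fin n)) :=
  famRestrictBases M.bases F

noncomputable def contractBases (M : FinMatroid n r) (F : Finset (Fin n)) :
    Finset (Finset (Fin n)) :=
  famContractBases M.bases F

/-- `𝓖` is a building set in the lattice of flats of `M` (with bottom element `∅` and
join = closure of union): for every nonempty flat `X`, the join map is an order
isomorphism from the product of the lower intervals of the maximal elements of
`𝓖` below `X` onto the lower interval of `X`. -/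
def IsFlatBuilding (M : FinMatroid n r) (𝓖 : Set (Finset (Fin n))) : Prop :=
  (∀ F ∈ 𝓖, M.IsFlat F ∧ F ≠ ∅) ∧
  ∀ X, M.IsFlat X → X ≠ ∅ →
    ∃ (k : ℕ) (g : Fin k → Finset (Fin n)),
      Function.Injective g ∧
      (∀ i, g i ∈ 𝓖 ∧ g i ⊆ X) ∧
      (∀ i, ∀ H ∈ 𝓖, H ⊆ X → g i ⊆ H → g i = H) ∧
      (∀ H ∈ 𝓖, H ⊆ X → ∃ i, H ⊆ g i) ∧
      ∃ e : (∀ i : Fin k, {F : Finset (Fin n) // M.IsFlat F ∧ F ⊆ g i}) ≃o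
              {F : Finset (Fin n) // M.IsFlat F ∧ F ⊆ X},
        ∀ y, (e y).1 = M.closure (Finset.univ.sup fun i => (y i).1)

/-- `S` is nested with respect to `𝓖` (in the lattice of flats of `M`): `S ⊆ 𝓖` and for
every subcollection of at least two pairwise incomparable members, their join (the
closure of their union) is not in `𝓖`. -/
def IsNested (M : FinMatroid n r) (𝓖 : Set (Finset (Fin n)))
    (S : Finset (Finset (Fin n))) : Prop :=
  ↑S ⊆ 𝓖 ∧ ∀ T ⊆ S, 2 ≤ T.card →
    (∀ A ∈ T, ∀ B ∈ T, A ≠ B → ¬ A ⊆ B ∧ ¬ B ⊆ A) →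
    M.closure (T.sup id) ∉ 𝓖

end FinMatroid

/-- A building set in the Boolean lattice of subsets of `Fin r`: for every nonempty
`X ⊆ [r]`, the union map is an order isomorphism from the product of the lower
intervals of the maximal elements of `𝓕` below `X` onto the lower interval of `X`. -/
def BoolBuilding {r : ℕ} (𝓕 : Set (Finset (Fin r))) : Prop :=
  (∀ F ∈ 𝓕, F ≠ ∅) ∧
  ∀ X : Finset (Fin r), X ≠ ∅ →
    ∃ (k : ℕ) (g : Fin k → Finset (Fin r)),
      Function.Injective g ∧
      (∀ i, g i ∈ 𝓕 ∧ g i ⊆ X) ∧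
      (∀ i, ∀ H ∈ 𝓕, H ⊆ X → g i ⊆ H → g i = H) ∧
      (∀ H ∈ 𝓕, H ⊆ X → ∃ i, H ⊆ g i) ∧
      ∃ e : (∀ i : Fin k, {F : Finset (Fin r) // F ⊆ g i}) ≃o
              {F : Finset (Fin r) // F ⊆ X},
        ∀ y, (e y).1 = Finset.univ.sup fun i => (y i).1

/-- `S` is nested with respect to `𝓕` in the Boolean lattice: for every subcollection
of at least two pairwise incomparable members, their union is not in `𝓕`. -/
def BoolNested {r : ℕ} (𝓕 : Set (Finset (Fin r))) (S : Finset (Finset (Fin r))) : Prop :=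
  ↑S ⊆ 𝓕 ∧ ∀ T ⊆ S, 2 ≤ T.card →
    (∀ A ∈ T, ∀ B ∈ T, A ≠ B → ¬ A ⊆ B ∧ ¬ B ⊆ A) →
    T.sup id ∉ 𝓕

/-- The simplex `Δ_F = conv{e_i : i ∈ F}`. -/
noncomputable def faceSimplex {r : ℕ} (F : Finset (Fin r)) : Set (Fin r → ℝ) :=
  convexHull ℝ ((fun i => (Pi.single i 1 : Fin r → ℝ)) '' ↑F)

/-- The Minkowski sum `Δ_𝓕 = Σ_{F ∈ 𝓕} Δ_F`. -/
noncomputable def minkSum {r : ℕ} (𝓕 : Finset (Finset (Fin r))) : Set (Fin r → ℝ) :=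
  ∑ F ∈ 𝓕, faceSimplex F

/-!
The weight of a basis `B` is `∑_G c_G |B ∩ G|` and `|B ∩ G| ≤ rk G`, so as soon as one basis
meets every `G ∈ S` in `rk G` elements, the `w`-maximal bases are exactly the bases that do.
Such a basis exists because the maximal members of `S` below any `G` are the blocks of the
building-set decomposition of their join: they are disjoint, and independent sets in them
combine to an independent set, so a basis can be assembled bottom-up. Disjointness and
subadditivity of rank also give `|σ ∩ F_{<G}| = rk F_{<G}` once `σ` meets every member below `G`
in full rank, and then `(σ ∩ G) \ F_{<G}` is a basis of `(M|G)/F_{<G}` iff `|σ ∩ G| = rk G`.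
-/

section FinsetFamilies

variable {α : Type*}

lemma forall_mem_congr_of_ssubset {S : Finset (Finset α)} {P Q : Finset α → Prop}
    (h : ∀ G ∈ S, (∀ H ∈ S, H ⊂ G → P H) → (P G ↔ Q G)) :
    (∀ G ∈ S, P G) ↔ ∀ G ∈ S, Q G := by
  refine ⟨fun hP G hG => (h G hG fun H hH _ => hP H hH).1 (hP G hG), fun hQ G => ?_⟩
  induction G using Finset.strongInduction with
  | H G ih => exact fun hG => (h G hG fun H hH hHG => ih H hHG hH).2 (hQ G hG)

variable [DecidableEq α]

lemma biUnion_inter_eq_of_pairwiseDisjoint {T : Finset (Finset α)}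
    (hT : (T : Set (Finset α)).PairwiseDisjoint id) {f : Finset α → Finset α}
    (hf : ∀ H ∈ T, f H ⊆ H) {H : Finset α} (hH : H ∈ T) : T.biUnion f ∩ H = f H := by
  refine Finset.Subset.antisymm (fun x hx => ?_)
    (Finset.subset_inter (Finset.subset_biUnion_of_mem f hH) (hf H hH))
  obtain ⟨hxf, hxH⟩ := Finset.mem_inter.1 hx
  obtain ⟨H', hH', hxH'⟩ := Finset.mem_biUnion.1 hxf
  obtain rfl | hne := eq_or_ne H' H
  · exact hxH'
  · exact absurd (hT hH' hH hne) (Finset.not_disjoint_iff.2 ⟨x, hf H' hH' hxH', hxH⟩)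

open scoped Classical in
noncomputable def maximalBelow (S : Finset (Finset α)) (G : Finset α) : Finset (Finset α) :=
  (S.filter (· ⊂ G)).filter (Maximal (· ∈ S.filter (· ⊂ G)))

variable {S : Finset (Finset α)} {G H : Finset α}

lemma mem_maximalBelow : H ∈ maximalBelow S G ↔ Maximal (· ∈ S.filter (· ⊂ G)) H := by
  classical
  rw [maximalBelow, Finset.mem_filter]
  exact and_iff_right_of_imp (·.1)

lemma maximalBelow_subset : maximalBelow S G ⊆ S :=
  fun _ hH => (Finset.mem_filter.1 (mem_maximalBelow.1 hH).1).1

lemma ssubset_of_mem_maximalBelow (hH : H ∈ maximalBelow S G) : H ⊂ G :=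
  (Finset.mem_filter.1 (mem_maximalBelow.1 hH).1).2

lemma isAntichain_maximalBelow :
    IsAntichain (· ⊆ ·) (maximalBelow S G : Set (Finset α)) :=
  (setOfPred_maximal_antichain _).subset fun _ hH => mem_maximalBelow.1 hH

lemma exists_subset_mem_maximalBelow (hH : H ∈ S) (hHG : H ⊂ G) :
    ∃ H' ∈ maximalBelow S G, H ⊆ H' :=
  let ⟨H', hHH', hH'⟩ := (S.filter (· ⊂ G)).exists_le_maximal (Finset.mem_filter.2 ⟨hH, hHG⟩)
  ⟨H', mem_maximalBelow.2 hH', hHH'⟩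

lemma sup_maximalBelow : (maximalBelow S G).sup id = (S.filter (· ⊂ G)).sup id := by
  refine (Finset.sup_mono fun H hH => (mem_maximalBelow.1 hH).1).antisymm
    (Finset.sup_le fun H hH => ?_)
  obtain ⟨hHS, hHG⟩ := Finset.mem_filter.1 hH
  obtain ⟨H', hH', hHH'⟩ := exists_subset_mem_maximalBelow hHS hHG
  exact hHH'.trans (Finset.le_sup (f := id) hH')

end FinsetFamilies

namespace FinMatroid

variable {n r : ℕ} (M : FinMatroid n r)

def toMatroid : Matroid (Fin n) :=
  Matroid.ofIsBaseOfFinite Set.finite_univ (fun B => ∃ B' ∈ M.bases, ↑B' = B)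
    (let ⟨B, hB⟩ := M.bases_nonempty; ⟨B, B, hB, rfl⟩)
    (by
      rintro _ _ ⟨B₁, hB₁, rfl⟩ ⟨B₂, hB₂, rfl⟩ i hi
      obtain ⟨j, hj, hB⟩ := M.exchange B₁ hB₁ B₂ hB₂ i (by simpa using hi)
      exact ⟨j, by simpa using hj, _, hB, by simp [Finset.coe_erase]⟩)
    (fun _ _ => Set.subset_univ _)

lemma indep_iff {I : Finset (Fin n)} : M.Indep I ↔ M.toMatroid.Indep ↑I := by
  simp only [Matroid.indep_iff, toMatroid]
  constructor
  · rintro ⟨B, hB, hIB⟩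
    exact ⟨B, ⟨B, hB, rfl⟩, Finset.coe_subset.2 hIB⟩
  · rintro ⟨_, ⟨B, hB, rfl⟩, hIB⟩
    exact ⟨B, hB, Finset.coe_subset.1 hIB⟩

lemma isCircuit_iff {C : Finset (Fin n)} : M.IsCircuit C ↔ M.toMatroid.IsCircuit ↑C := by
  rw [Matroid.isCircuit_iff_forall_ssubset, Matroid.dep_iff]
  change (¬ M.Indep C ∧ ∀ D ⊂ C, M.Indep D) ↔ _
  simp only [indep_iff]
  refine and_congr (iff_self_and.2 fun _ => Set.subset_univ _) ⟨fun h I hI => ?_, fun h D hD => ?_⟩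
  · obtain ⟨D, rfl⟩ := (Set.toFinite I).exists_finset_coe
    exact h D (Finset.coe_ssubset.1 hI)
  · exact h (Finset.coe_ssubset.2 hD)

lemma isFlat_iff {F : Finset (Fin n)} : M.IsFlat F ↔ M.toMatroid.IsFlat ↑F := by
  refine ⟨fun hF => Matroid.isFlat_iff_closure_eq.2 ?_, fun hF C hC hCF => ?_⟩
  · refine (M.toMatroid.subset_closure _ (Set.subset_univ _)).antisymm' fun e he => ?_
    by_contra heF
    obtain ⟨C, hCF, hC, heC⟩ := (M.toMatroid.mem_closure_iff_exists_isCircuit heF).1 he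
    obtain ⟨C, rfl⟩ := (Set.toFinite C).exists_finset_coe
    refine hF C ((M.isCircuit_iff).2 hC) (Finset.card_eq_one.2 ⟨e, ?_⟩)
    ext x
    simp only [Finset.mem_sdiff, Finset.mem_singleton]
    refine ⟨fun hx => ?_, fun hx => hx ▸ ⟨heC, heF⟩⟩
    simpa [hx.2] using hCF hx.1
  · obtain ⟨z, hz⟩ := Finset.card_eq_one.1 hCF
    have hzC : z ∈ C \ F := hz ▸ Finset.mem_singleton_self z
    rw [Finset.mem_sdiff] at hzC
    refine hzC.2 (hF.closure.subset (M.toMatroid.closure_subset_closure ?_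
      (((M.isCircuit_iff).1 hC).mem_closure_sdiff_singleton_of_mem hzC.1)))
    intro x hx
    by_contra hxF
    have : x ∈ C \ F := Finset.mem_sdiff.2 ⟨hx.1, hxF⟩
    exact hx.2 (by simpa [hz] using this)

lemma coe_closure (A : Finset (Fin n)) : ↑(M.closure A) = M.toMatroid.closure ↑A := by
  ext x
  simp only [closure, Finset.coe_filter, Finset.mem_univ, true_and, Set.mem_ofPred_eq]
  refine ⟨fun hx => ?_, fun hx F hF hAF => ?_⟩
  · obtain ⟨F, hF⟩ := (Set.toFinite (M.toMatroid.closure ↑A)).exists_finset_coe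
    rw [← hF]
    refine hx F ((M.isFlat_iff).2 (hF ▸ M.toMatroid.isFlat_closure _)) ?_
    exact Finset.coe_subset.1 (hF ▸ M.toMatroid.subset_closure _ (Set.subset_univ _))
  · have := M.toMatroid.closure_subset_closure (Finset.coe_subset.2 hAF) hx
    rwa [((M.isFlat_iff).1 hF).closure] at this

lemma card_le_rk {I F : Finset (Fin n)} (hI : M.Indep I) (hIF : I ⊆ F) : I.card ≤ M.rk F := by
  classical
  exact Finset.le_sup (f := Finset.card) (Finset.mem_filter.2 ⟨Finset.mem_powerset.2 hIF, hI⟩)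

lemma exists_indep_card_eq_rk (F : Finset (Fin n)) :
    ∃ I ⊆ F, M.Indep I ∧ I.card = M.rk F := by
  classical
  obtain ⟨B, hB⟩ := M.bases_nonempty
  obtain ⟨I, hI, hIc⟩ := Finset.exists_mem_eq_sup (F.powerset.filter fun I => FamIndep M.bases I)
    ⟨∅, Finset.mem_filter.2 ⟨Finset.empty_mem_powerset F, B, hB, Finset.empty_subset B⟩⟩ Finset.card
  rw [Finset.mem_filter, Finset.mem_powerset] at hI
  exact ⟨I, hI.1, hI.2, hIc.symm⟩

lemma cast_rk (F : Finset (Fin n)) : (M.rk F : ℕ∞) = M.toMatroid.eRk ↑F := by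
  refine le_antisymm ?_ ?_
  · obtain ⟨I, hIF, hI, hc⟩ := M.exists_indep_card_eq_rk F
    rw [← hc, ← Set.encard_coe_eq_coe_finsetCard]
    exact ((M.indep_iff).1 hI).encard_le_eRk_of_subset (Finset.coe_subset.2 hIF)
  · obtain ⟨I, hI⟩ := M.toMatroid.exists_isBasis' ↑F
    obtain ⟨I, rfl⟩ := (Set.toFinite I).exists_finset_coe
    rw [← hI.encard_eq_eRk, Set.encard_coe_eq_coe_finsetCard]
    exact_mod_cast M.card_le_rk ((M.indep_iff).2 hI.indep) (Finset.coe_subset.1 hI.subset)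

lemma subset_closure (A : Finset (Fin n)) : A ⊆ M.closure A := by
  rw [← Finset.coe_subset, coe_closure]
  exact M.toMatroid.subset_closure _ (Set.subset_univ _)

lemma isFlat_closure (A : Finset (Fin n)) : M.IsFlat (M.closure A) := by
  rw [isFlat_iff, coe_closure]
  exact M.toMatroid.isFlat_closure _

lemma closure_subset_of_isFlat {A F : Finset (Fin n)} (hF : M.IsFlat F) (hAF : A ⊆ F) :
    M.closure A ⊆ F := by
  rw [← Finset.coe_subset, coe_closure, ← ((M.isFlat_iff).1 hF).closure]
  exact M.toMatroid.closure_subset_closure (Finset.coe_subset.2 hAF)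

lemma closure_mono {A B : Finset (Fin n)} (h : A ⊆ B) : M.closure A ⊆ M.closure B :=
  M.closure_subset_of_isFlat (M.isFlat_closure B) (h.trans (M.subset_closure B))

variable {M}

lemma IsFlat.closure_eq {F : Finset (Fin n)} (hF : M.IsFlat F) : M.closure F = F :=
  (M.closure_subset_of_isFlat hF subset_rfl).antisymm (M.subset_closure F)

lemma IsFlat.inter {F₁ F₂ : Finset (Fin n)} (h₁ : M.IsFlat F₁) (h₂ : M.IsFlat F₂) :
    M.IsFlat (F₁ ∩ F₂) := by
  have : M.closure (F₁ ∩ F₂) = F₁ ∩ F₂ :=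
    (Finset.subset_inter (M.closure_subset_of_isFlat h₁ Finset.inter_subset_left)
      (M.closure_subset_of_isFlat h₂ Finset.inter_subset_right)).antisymm (M.subset_closure _)
  exact this ▸ M.isFlat_closure _

lemma Loopless.isFlat_empty (hM : M.Loopless) : M.IsFlat ∅ := by
  intro C hC hCF
  obtain ⟨z, hz⟩ := Finset.card_eq_one.1 hCF
  rw [Finset.sdiff_empty] at hz
  exact hC.1 (hz ▸ hM z)

lemma Loopless.closure_empty (hM : M.Loopless) : M.closure ∅ = ∅ :=
  hM.isFlat_empty.closure_eq

variable (M)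

lemma isFlat_univ : M.IsFlat Finset.univ := by
  intro C _
  simp [Finset.sdiff_eq_empty_iff_subset.2 (Finset.subset_univ C)]

lemma rk_closure (A : Finset (Fin n)) : M.rk (M.closure A) = M.rk A := by
  have := M.cast_rk (M.closure A)
  rwa [coe_closure, Matroid.eRk_closure_eq, ← cast_rk, Nat.cast_inj] at this

lemma rk_union_le (A B : Finset (Fin n)) : M.rk (A ∪ B) ≤ M.rk A + M.rk B := by
  have := M.toMatroid.eRk_union_le_eRk_add_eRk ↑A ↑B
  rwa [← Finset.coe_union, ← cast_rk, ← cast_rk, ← cast_rk, ← Nat.cast_add, Nat.cast_le] at this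

lemma rk_sup_le (T : Finset (Finset (Fin n))) : M.rk (T.sup id) ≤ ∑ H ∈ T, M.rk H := by
  classical
  induction T using Finset.induction with
  | empty =>
    obtain ⟨I, hI, -, hIc⟩ := M.exists_indep_card_eq_rk ∅
    simp [← hIc, Finset.subset_empty.1 hI]
  | insert H T hH ih =>
    rw [Finset.sup_insert, Finset.sum_insert hH]
    exact (M.rk_union_le _ _).trans (Nat.add_le_add_left ih _)

lemma rk_univ : M.rk Finset.univ = r := by
  obtain ⟨I, -, ⟨B, hB, hIB⟩, hIc⟩ := M.exists_indep_card_eq_rk Finset.univ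
  obtain ⟨B₀, hB₀⟩ := M.bases_nonempty
  refine le_antisymm (hIc ▸ (Finset.card_le_card hIB).trans (M.card_bases B hB).le) ?_
  exact M.card_bases B₀ hB₀ ▸ M.card_le_rk ⟨B₀, hB₀, subset_rfl⟩ (Finset.subset_univ _)

variable {M}

lemma indep_iff_forall_notMem_closure_erase {I : Finset (Fin n)} :
    M.Indep I ↔ ∀ x ∈ I, x ∉ M.closure (I.erase x) := by
  rw [indep_iff, Matroid.indep_iff_forall_notMem_closure_sdiff (Set.subset_univ _)]
  simp only [Finset.mem_coe, ← Finset.coe_erase, ← coe_closure]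

lemma Indep.subset {I J : Finset (Fin n)} (hJ : M.Indep J) (hIJ : I ⊆ J) : M.Indep I :=
  let ⟨B, hB, hJB⟩ := hJ
  ⟨B, hB, hIJ.trans hJB⟩

lemma Indep.card_inter_le_rk {I : Finset (Fin n)} (hI : M.Indep I) (G : Finset (Fin n)) :
    (I ∩ G).card ≤ M.rk G :=
  M.card_le_rk (hI.subset Finset.inter_subset_left) Finset.inter_subset_right

lemma Indep.exists_superset_card_eq_rk {I F : Finset (Fin n)} (hI : M.Indep I) (hIF : I ⊆ F) :
    ∃ J, I ⊆ J ∧ J ⊆ F ∧ M.Indep J ∧ J.card = M.rk F := by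
  obtain ⟨J, hJ, hIJ⟩ := ((M.indep_iff).1 hI).subset_isBasis'_of_subset (Finset.coe_subset.2 hIF)
  obtain ⟨J, rfl⟩ := (Set.toFinite J).exists_finset_coe
  refine ⟨J, Finset.coe_subset.1 hIJ, Finset.coe_subset.1 hJ.subset, (M.indep_iff).2 hJ.indep, ?_⟩
  have := hJ.encard_eq_eRk
  rwa [Set.encard_coe_eq_coe_finsetCard, ← cast_rk, Nat.cast_inj] at this

lemma mem_bases_of_indep_of_card_eq {I : Finset (Fin n)} (hI : M.Indep I) (hIc : I.card = r) :
    I ∈ M.bases := by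
  obtain ⟨B, hB, hIB⟩ := hI
  rwa [Finset.eq_of_subset_of_card_le hIB (by rw [hIc, M.card_bases B hB])]

variable (M)

lemma mem_restrictBases_iff {G B : Finset (Fin n)} :
    B ∈ M.restrictBases G ↔ B ⊆ G ∧ M.Indep B ∧ B.card = M.rk G := by
  classical
  simp only [restrictBases, famRestrictBases, Finset.mem_filter, Finset.mem_powerset]
  refine and_congr_right fun hBG => ⟨fun ⟨hB, hmax⟩ => ⟨hB, ?_⟩, fun ⟨hB, hBc⟩ => ⟨hB, ?_⟩⟩
  · obtain ⟨J, hBJ, hJG, hJ, hJc⟩ := Indep.exists_superset_card_eq_rk (M := M) hB hBG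
    rwa [hmax J hJG hJ hBJ]
  · exact fun J hJG hJ hBJ =>
      Finset.eq_of_subset_of_card_le hBJ (hBc ▸ M.card_le_rk hJ hJG)

lemma famIndep_restrictBases_iff {G I : Finset (Fin n)} (hIG : I ⊆ G) :
    FamIndep (M.restrictBases G) I ↔ M.Indep I := by
  refine ⟨fun ⟨B, hB, hIB⟩ => ((M.mem_restrictBases_iff).1 hB).2.1.subset hIB, fun hI => ?_⟩
  obtain ⟨J, hIJ, hJG, hJ, hJc⟩ := hI.exists_superset_card_eq_rk hIG
  exact ⟨J, (M.mem_restrictBases_iff).2 ⟨hJG, hJ, hJc⟩, hIJ⟩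

lemma famRk_restrictBases {F G : Finset (Fin n)} (hFG : F ⊆ G) :
    famRk (M.restrictBases G) F = M.rk F := by
  classical
  unfold rk famRk
  congr 1
  exact Finset.filter_congr fun I hI =>
    M.famIndep_restrictBases_iff ((Finset.mem_powerset.1 hI).trans hFG)

lemma inter_sdiff_mem_famContractBases_iff {σ F G : Finset (Fin n)} (hσ : M.Indep σ)
    (hFG : F ⊆ G) (hσF : (σ ∩ F).card = M.rk F) :
    (σ ∩ G) \ F ∈ famContractBases (M.restrictBases G) F ↔ (σ ∩ G).card = M.rk G := by
  classical
  have hσGF : σ ∩ G ∩ F = σ ∩ F := by rw [Finset.inter_assoc, Finset.inter_eq_right.2 hFG]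
  simp only [famContractBases, Finset.mem_image, Finset.mem_filter, M.famRk_restrictBases hFG,
    M.mem_restrictBases_iff]
  constructor
  · rintro ⟨B, ⟨⟨-, -, hBc⟩, hBF⟩, hBσ⟩
    rw [← Finset.card_inter_add_card_sdiff (σ ∩ G) F, hσGF, ← hBσ, hσF, ← hBF,
      Finset.card_inter_add_card_sdiff, hBc]
  · intro hσG
    exact ⟨σ ∩ G, ⟨⟨Finset.inter_subset_right, hσ.subset Finset.inter_subset_left, hσG⟩,
      by rw [hσGF, hσF]⟩, rfl⟩

lemma sum_sum_mul_indVec (B : Finset (Fin n)) (𝒮 : Finset (Finset (Fin n)))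
    (c : Finset (Fin n) → ℝ) :
    ∑ i ∈ B, ∑ G ∈ 𝒮, c G * indVec G i = ∑ G ∈ 𝒮, c G * (B ∩ G).card := by
  classical
  rw [Finset.sum_comm]
  refine Finset.sum_congr rfl fun G _ => ?_
  simp [indVec, mul_comm]

lemma isMaxBasis_iff_forall_card_inter_eq_rk {𝒮 : Finset (Finset (Fin n))}
    {c : Finset (Fin n) → ℝ} (hc : ∀ G ∈ 𝒮, 0 < c G)
    (hτ : ∃ τ ∈ M.bases, ∀ G ∈ 𝒮, (τ ∩ G).card = M.rk G) {σ : Finset (Fin n)}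
    (hσ : σ ∈ M.bases) :
    M.IsMaxBasis (fun i => ∑ G ∈ 𝒮, c G * indVec G i) σ ↔
      ∀ G ∈ 𝒮, (σ ∩ G).card = M.rk G := by
  have hle : ∀ B ∈ M.bases, ∀ G ∈ 𝒮, c G * (B ∩ G).card ≤ c G * M.rk G := fun B hB G hG =>
    mul_le_mul_of_nonneg_left (Nat.cast_le.2 (Indep.card_inter_le_rk ⟨B, hB, subset_rfl⟩ G))
      (hc G hG).le
  simp only [IsMaxBasis, sum_sum_mul_indVec, hσ, true_and]
  constructor
  · intro hmax G hG
    obtain ⟨τ, hτ, hτ𝒮⟩ := hτ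
    have hτσ : ∑ G ∈ 𝒮, c G * M.rk G ≤ ∑ G ∈ 𝒮, c G * (σ ∩ G).card :=
      (Finset.sum_congr rfl fun G hG => by rw [hτ𝒮 G hG]).trans_le (hmax τ hτ)
    have := (Finset.sum_eq_sum_iff_of_le (hle σ hσ)).1 ((Finset.sum_le_sum (hle σ hσ)).antisymm hτσ)
    exact_mod_cast mul_left_cancel₀ (hc G hG).ne' (this G hG)
  · intro hσ𝒮 B hB
    calc ∑ G ∈ 𝒮, c G * (B ∩ G).card ≤ ∑ G ∈ 𝒮, c G * M.rk G := Finset.sum_le_sum (hle B hB)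
      _ = ∑ G ∈ 𝒮, c G * (σ ∩ G).card := Finset.sum_congr rfl fun G hG => by rw [hσ𝒮 G hG]

lemma card_inter_closure_sup_eq_rk {σ : Finset (Fin n)} (hσ : M.Indep σ)
    {T : Finset (Finset (Fin n))} (hT : (T : Set (Finset (Fin n))).PairwiseDisjoint id)
    (hσT : ∀ H ∈ T, (σ ∩ H).card = M.rk H) :
    (σ ∩ M.closure (T.sup id)).card = M.rk (M.closure (T.sup id)) := by
  classical
  refine le_antisymm (hσ.card_inter_le_rk _) ?_
  calc M.rk (M.closure (T.sup id)) = M.rk (T.sup id) := M.rk_closure _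
    _ ≤ ∑ H ∈ T, M.rk H := M.rk_sup_le T
    _ = ∑ H ∈ T, (σ ∩ H).card := (Finset.sum_congr rfl hσT).symm
    _ = (T.biUnion (σ ∩ ·)).card :=
      (Finset.card_biUnion (hT.mono fun _ => Finset.inter_subset_right)).symm
    _ ≤ (σ ∩ M.closure (T.sup id)).card := Finset.card_le_card (Finset.biUnion_subset.2 fun H hH =>
      Finset.inter_subset_inter_left ((Finset.le_sup (f := id) hH).trans (M.subset_closure _)))

def IsJoinDecomposition (X : Finset (Fin n)) {k : ℕ} (g : Fin k → Finset (Fin n)) : Prop :=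
  ∃ e : (∀ i : Fin k, {F : Finset (Fin n) // M.IsFlat F ∧ F ⊆ g i}) ≃o
      {F : Finset (Fin n) // M.IsFlat F ∧ F ⊆ X},
    ∀ y, (e y).1 = M.closure (Finset.univ.sup fun i => (y i).1)

namespace IsJoinDecomposition

variable {M} {X : Finset (Fin n)} {k : ℕ} {g : Fin k → Finset (Fin n)}
  (hd : M.IsJoinDecomposition X g) (hg : ∀ i, M.IsFlat (g i))
include hd hg

/-- The inverse of the join map is `F ↦ (F ∩ g i)ᵢ`. -/
lemma closure_sup_inter {y : Fin k → Finset (Fin n)} (hy : ∀ i, M.IsFlat (y i) ∧ y i ⊆ g i)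
    (i : Fin k) : M.closure (Finset.univ.sup y) ∩ g i = y i := by
  obtain ⟨e, he⟩ := hd
  set F := M.closure (Finset.univ.sup y)
  let z : ∀ i, {F : Finset (Fin n) // M.IsFlat F ∧ F ⊆ g i} :=
    fun i => ⟨F ∩ g i, (M.isFlat_closure _).inter (hg i), Finset.inter_subset_right⟩
  have hzy : z ≤ fun i => ⟨y i, hy i⟩ := by
    refine e.le_iff_le.1 ?_
    change (e z).1 ⊆ (e _).1
    rw [he, he]
    exact M.closure_subset_of_isFlat (M.isFlat_closure _)
      (Finset.sup_le fun i _ => Finset.inter_subset_left)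
  exact Finset.Subset.antisymm (hzy i) (Finset.subset_inter
    ((Finset.le_sup (f := y) (Finset.mem_univ i)).trans (M.subset_closure _)) (hy i).2)

lemma subset (i : Fin k) : g i ⊆ X := by
  obtain ⟨e, he⟩ := hd
  have := (e fun i => ⟨g i, hg i, subset_rfl⟩).2.2
  rw [he] at this
  exact (Finset.le_sup (f := g) (Finset.mem_univ i)).trans ((M.subset_closure _).trans this)

lemma eq_of_closure_sup_eq {y : Fin k → Finset (Fin n)} (hy : ∀ i, M.IsFlat (y i) ∧ y i ⊆ g i)
    (hyX : M.closure (Finset.univ.sup y) = X) : y = g := by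
  funext i
  rw [← hd.closure_sup_inter hg hy i, hyX, Finset.inter_eq_right.2 (hd.subset hg i)]

lemma disjoint (hM : M.Loopless) {i j : Fin k} (hij : i ≠ j) : Disjoint (g i) (g j) := by
  classical
  set y : Fin k → Finset (Fin n) := fun l => if l = i then g i else ∅
  have hy : ∀ l, M.IsFlat (y l) ∧ y l ⊆ g l := by
    intro l
    by_cases hl : l = i
    · simp only [y, hl, if_true]
      exact ⟨hg i, subset_rfl⟩
    · simp only [y, if_neg hl]
      exact ⟨hM.isFlat_empty, Finset.empty_subset _⟩
  have hgi : g i ⊆ M.closure (Finset.univ.sup y) := by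
    have := Finset.le_sup (f := y) (Finset.mem_univ i)
    simp only [y, if_true] at this
    exact this.trans (M.subset_closure _)
  rw [Finset.disjoint_iff_inter_eq_empty, ← Finset.subset_empty]
  calc g i ∩ g j ⊆ M.closure (Finset.univ.sup y) ∩ g j := Finset.inter_subset_inter_right hgi
    _ = ∅ := by simp [hd.closure_sup_inter hg hy j, y, hij.symm]

/-- An element spanned by the rest of `I` would, by `closure_sup_inter`, be spanned by the rest of
its trace on its own block. -/
lemma indep_of_forall_indep_inter {I : Finset (Fin n)} (hI : I ⊆ Finset.univ.sup g)
    (hIg : ∀ i, M.Indep (I ∩ g i)) : M.Indep I := by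
  classical
  refine indep_iff_forall_notMem_closure_erase.2 fun x hxI hxcl => ?_
  obtain ⟨i, -, hxi⟩ := Finset.mem_sup.1 (hI hxI)
  set A := (I ∩ g i).erase x
  set y : Fin k → Finset (Fin n) := fun l => if l = i then M.closure A else g l
  have hy : ∀ l, M.IsFlat (y l) ∧ y l ⊆ g l := by
    intro l
    by_cases hl : l = i
    · subst hl
      simp only [y, if_pos rfl]
      exact ⟨M.isFlat_closure A, M.closure_subset_of_isFlat (hg l)
        ((Finset.erase_subset x _).trans Finset.inter_subset_right)⟩
    · simp only [y, if_neg hl]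
      exact ⟨hg l, subset_rfl⟩
  have hIy : I.erase x ⊆ Finset.univ.sup y := by
    intro z hz
    obtain ⟨j, -, hzj⟩ := Finset.mem_sup.1 (hI (Finset.mem_of_mem_erase hz))
    refine Finset.mem_sup.2 ⟨j, Finset.mem_univ j, ?_⟩
    by_cases hj : j = i
    · subst hj
      simp only [y, if_pos rfl]
      exact M.subset_closure A (Finset.mem_erase.2 ⟨Finset.ne_of_mem_erase hz,
        Finset.mem_inter.2 ⟨Finset.mem_of_mem_erase hz, hzj⟩⟩)
    · simpa [y, if_neg hj] using hzj
  have hxA : x ∈ M.closure A := by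
    have := hd.closure_sup_inter hg hy i
    simp only [y, if_pos rfl] at this
    exact this ▸ Finset.mem_inter.2 ⟨M.closure_mono hIy hxcl, hxi⟩
  exact indep_iff_forall_notMem_closure_erase.1 (hIg i) x (Finset.mem_inter.2 ⟨hxI, hxi⟩) hxA

lemma closure_sup_filter_subset {T : Finset (Finset (Fin n))} (hTX : M.closure (T.sup id) = X)
    (hT : ∀ H ∈ T, ∃ i, H ⊆ g i) (i : Fin k) :
    M.closure ((T.filter (· ⊆ g i)).sup id) = g i := by
  classical
  refine congrFun (hd.eq_of_closure_sup_eq hg (fun i => ⟨M.isFlat_closure _,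
    M.closure_subset_of_isFlat (hg i) (Finset.sup_le fun H hH => (Finset.mem_filter.1 hH).2)⟩) ?_) i
  rw [← hTX]
  refine (M.closure_subset_of_isFlat (M.isFlat_closure _) (Finset.sup_le fun i _ =>
    M.closure_mono (Finset.sup_mono (Finset.filter_subset _ _)))).antisymm
    (M.closure_mono (Finset.sup_le fun H hH => ?_))
  obtain ⟨i, hi⟩ := hT H hH
  exact (Finset.le_sup (f := id) (Finset.mem_filter.2 ⟨hH, hi⟩)).trans ((M.subset_closure _).trans
    (Finset.le_sup (f := fun i => M.closure ((T.filter (· ⊆ g i)).sup id)) (Finset.mem_univ i)))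

end IsJoinDecomposition

namespace IsNested

variable {M} {𝓖 : Set (Finset (Fin n))} {S : Finset (Finset (Fin n))}
  (hS : M.IsNested (𝓖 ∪ {Finset.univ}) S)
include hS

lemma mem_of_ne_univ {G : Finset (Fin n)} (hG : G ∈ S) (hGu : G ≠ Finset.univ) : G ∈ 𝓖 :=
  (hS.1 hG).resolve_right hGu

lemma isFlat (h𝓖 : M.IsFlatBuilding 𝓖) {G : Finset (Fin n)} (hG : G ∈ S) : M.IsFlat G := by
  by_cases hGu : G = Finset.univ
  · exact hGu ▸ M.isFlat_univ
  · exact (h𝓖.1 G (hS.mem_of_ne_univ hG hGu)).1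

variable (hM : M.Loopless) (h𝓖 : M.IsFlatBuilding 𝓖)
include hM h𝓖

section Antichain

variable {T : Finset (Finset (Fin n))} (hTS : T ⊆ S)
  (hT : IsAntichain (· ⊆ ·) (T : Set (Finset (Fin n)))) (huniv : Finset.univ ∉ T)
include hTS hT huniv

/-- A block containing two members of `T` would be their join, which nestedness forbids, and a
block containing none would be spanned by `∅`. -/
lemma exists_isJoinDecomposition (hTne : T.Nonempty) :
    ∃ (k : ℕ) (g : Fin k → Finset (Fin n)), (∀ i, M.IsFlat (g i)) ∧
      M.IsJoinDecomposition (M.closure (T.sup id)) g ∧ T = Finset.univ.image g := by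
  classical
  have hT𝓖 : ∀ H ∈ T, H ∈ 𝓖 := fun H hH =>
    hS.mem_of_ne_univ (hTS hH) (ne_of_mem_of_not_mem hH huniv)
  set X := M.closure (T.sup id)
  have hTX : ∀ H ∈ T, H ⊆ X := fun H hH =>
    (Finset.le_sup (f := id) hH).trans (M.subset_closure _)
  obtain ⟨H₀, hH₀⟩ := hTne
  have hX : X ≠ ∅ := fun h =>
    (h𝓖.1 H₀ (hT𝓖 H₀ hH₀)).2 (Finset.subset_empty.1 (h ▸ hTX H₀ hH₀))
  obtain ⟨k, g, -, hg𝓖, -, hcover𝓖, e, he⟩ := h𝓖.2 X (M.isFlat_closure _) hX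
  have hg : ∀ i, M.IsFlat (g i) := fun i => (h𝓖.1 _ (hg𝓖 i).1).1
  have hd : M.IsJoinDecomposition X g := ⟨e, he⟩
  set Ti : Fin k → Finset (Finset (Fin n)) := fun i => T.filter (· ⊆ g i)
  have hcover : ∀ H ∈ T, ∃ i, H ⊆ g i := fun H hH => hcover𝓖 H (hT𝓖 H hH) (hTX H hH)
  have hTi : ∀ i, Ti i = {g i} := by
    intro i
    have hcli : M.closure ((Ti i).sup id) = g i := hd.closure_sup_filter_subset hg rfl hcover i
    have hne : (Ti i).Nonempty := Finset.nonempty_iff_ne_empty.2 fun h => (h𝓖.1 _ (hg𝓖 i).1).2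
      (by rw [← hcli, h, Finset.sup_empty, Finset.bot_eq_empty, hM.closure_empty])
    have hlt : (Ti i).card < 2 := by
      by_contra! h2
      refine hS.2 (Ti i) ((Finset.filter_subset _ _).trans hTS) h2 (fun A hA B hB hAB =>
        ⟨hT (Finset.filter_subset _ _ hA) (Finset.filter_subset _ _ hB) hAB,
          hT (Finset.filter_subset _ _ hB) (Finset.filter_subset _ _ hA) hAB.symm⟩) ?_
      rw [hcli]
      exact Or.inl (hg𝓖 i).1
    obtain ⟨H, hH⟩ := Finset.card_eq_one.1 (show (Ti i).card = 1 by have := hne.card_pos; omega)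
    have hHT : H ∈ T := Finset.filter_subset _ _ (hH ▸ Finset.mem_singleton_self H)
    rw [hH, Finset.sup_singleton, id, (hS.isFlat h𝓖 (hTS hHT)).closure_eq] at hcli
    rw [hH, hcli]
  refine ⟨k, g, hg, hd, Finset.ext fun H => ⟨fun hH => ?_, ?_⟩⟩
  · obtain ⟨i, hi⟩ := hcover H hH
    have : H ∈ Ti i := Finset.mem_filter.2 ⟨hH, hi⟩
    rw [hTi i, Finset.mem_singleton] at this
    exact Finset.mem_image.2 ⟨i, Finset.mem_univ i, this.symm⟩
  · intro hH
    obtain ⟨i, -, rfl⟩ := Finset.mem_image.1 hH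
    exact Finset.filter_subset _ _ ((hTi i).symm ▸ Finset.mem_singleton_self (g i) : g i ∈ Ti i)

lemma pairwiseDisjoint : (T : Set (Finset (Fin n))).PairwiseDisjoint id := by
  intro A hA B hB hAB
  obtain ⟨k, g, hg, hd, rfl⟩ := hS.exists_isJoinDecomposition hM h𝓖 hTS hT huniv ⟨A, hA⟩
  obtain ⟨i, -, rfl⟩ := Finset.mem_image.1 hA
  obtain ⟨j, -, rfl⟩ := Finset.mem_image.1 hB
  exact hd.disjoint hg hM fun h => hAB (h ▸ rfl)

lemma indep_of_forall_indep_inter {I : Finset (Fin n)} (hI : I ⊆ T.sup id)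
    (hIT : ∀ H ∈ T, M.Indep (I ∩ H)) : M.Indep I := by
  classical
  rcases T.eq_empty_or_nonempty with rfl | hTne
  · obtain ⟨B, hB⟩ := M.bases_nonempty
    exact Finset.subset_empty.1 hI ▸ ⟨B, hB, Finset.empty_subset B⟩
  obtain ⟨k, g, hg, hd, rfl⟩ := hS.exists_isJoinDecomposition hM h𝓖 hTS hT huniv hTne
  exact hd.indep_of_forall_indep_inter hg (by simpa [Finset.sup_image] using hI)
    fun i => hIT _ (Finset.mem_image_of_mem g (Finset.mem_univ i))

end Antichain

lemma card_inter_closure_eq_rk {σ G : Finset (Fin n)} (hσ : M.Indep σ)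
    (hσS : ∀ H ∈ S, H ⊂ G → (σ ∩ H).card = M.rk H) :
    (σ ∩ M.closure ((S.filter (· ⊂ G)).sup id)).card =
      M.rk (M.closure ((S.filter (· ⊂ G)).sup id)) := by
  rw [← sup_maximalBelow]
  exact M.card_inter_closure_sup_eq_rk hσ
    (hS.pairwiseDisjoint hM h𝓖 maximalBelow_subset isAntichain_maximalBelow
      fun h => (ssubset_of_mem_maximalBelow h).2 (Finset.subset_univ G))
    fun H hH => hσS H (maximalBelow_subset hH) (ssubset_of_mem_maximalBelow hH)

lemma exists_indep_forall_card_inter_eq_rk {G : Finset (Fin n)} (hG : G ∈ S) :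
    ∃ I ⊆ G, M.Indep I ∧ ∀ H ∈ S, H ⊆ G → (I ∩ H).card = M.rk H := by
  classical
  induction G using Finset.strongInduction with
  | H G ih =>
  set T := maximalBelow S G
  have huniv : Finset.univ ∉ T := fun h =>
    (ssubset_of_mem_maximalBelow h).2 (Finset.subset_univ G)
  have hchild : ∀ H, ∃ I, H ∈ T →
      I ⊆ H ∧ M.Indep I ∧ ∀ H' ∈ S, H' ⊆ H → (I ∩ H').card = M.rk H' := by
    intro H
    by_cases hH : H ∈ T
    · obtain ⟨I, hIH, hI, hIS⟩ :=
        ih H (ssubset_of_mem_maximalBelow hH) (maximalBelow_subset hH)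
      exact ⟨I, fun _ => ⟨hIH, hI, hIS⟩⟩
    · exact ⟨∅, fun h => absurd h hH⟩
  choose f hf using hchild
  have hJ : M.Indep (T.biUnion f) := by
    refine hS.indep_of_forall_indep_inter hM h𝓖 maximalBelow_subset isAntichain_maximalBelow
      huniv (Finset.biUnion_subset.2 fun H hH => (hf H hH).1.trans (Finset.le_sup (f := id) hH))
      fun H hH => ?_
    rw [biUnion_inter_eq_of_pairwiseDisjoint (hS.pairwiseDisjoint hM h𝓖 maximalBelow_subset
      isAntichain_maximalBelow huniv) (fun H hH => (hf H hH).1) hH]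
    exact (hf H hH).2.1
  obtain ⟨K, hJK, hKG, hK, hKc⟩ := hJ.exists_superset_card_eq_rk (Finset.biUnion_subset.2
    fun H hH => (hf H hH).1.trans (ssubset_of_mem_maximalBelow hH).1)
  refine ⟨K, hKG, hK, fun H hH hHG => ?_⟩
  obtain rfl | hHG := hHG.eq_or_ssubset
  · rw [Finset.inter_eq_left.2 hKG, hKc]
  obtain ⟨H', hH'T, hHH'⟩ := exists_subset_mem_maximalBelow hH hHG
  refine le_antisymm (hK.card_inter_le_rk H) ?_
  calc M.rk H = (f H' ∩ H).card := ((hf H' hH'T).2.2 H hH hHH').symm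
    _ ≤ (K ∩ H).card := Finset.card_le_card
      (Finset.inter_subset_inter_right ((Finset.subset_biUnion_of_mem f hH'T).trans hJK))

lemma exists_mem_bases_forall_card_inter_eq_rk (htop : Finset.univ ∈ S) :
    ∃ τ ∈ M.bases, ∀ G ∈ S, (τ ∩ G).card = M.rk G := by
  obtain ⟨τ, -, hτ, hτS⟩ := hS.exists_indep_forall_card_inter_eq_rk hM h𝓖 htop
  refine ⟨τ, mem_bases_of_indep_of_card_eq hτ ?_, fun G hG => hτS G hG (Finset.subset_univ G)⟩
  simpa [M.rk_univ] using hτS _ htop subset_rfl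

end IsNested

end FinMatroid

/-- Let `S ∋ [n]` be nested with respect to `𝓖 ∪ {[n]}` and
`w = ∑_{G ∈ S, G ≠ [n]} c_G e_G` with `c_G > 0`.  A basis `σ` of `M` is `w`-maximal iff
for every `G ∈ S`, the set `(σ ∩ G) \ F_{<G}` is a basis of the minor `(M|G)/F_{<G}`,
where `F_{<G}` is the closure of the union of the members of `S` properly contained in
`G`; that is, `M_w` is the direct sum of the matroids `(M|G)/F_{<G}`, `G ∈ S`. -/
theorem statement15 {n r : ℕ} (M : FinMatroid n r) (hM : M.Loopless)
    (𝓖 : Set (Finset (Fin n))) (h𝓖 : M.IsFlatBuilding 𝓖)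
    (S : Finset (Finset (Fin n))) (hS : M.IsNested (𝓖 ∪ {Finset.univ}) S)
    (htop : Finset.univ ∈ S)
    (c : Finset (Fin n) → ℝ) (hc : ∀ G ∈ S.erase Finset.univ, 0 < c G)
    (w : Fin n → ℝ)
    (hw : w = fun i => ∑ G ∈ S.erase Finset.univ, c G * indVec G i) :
    ∀ σ ∈ M.bases,
      (M.IsMaxBasis w σ ↔
        ∀ G ∈ S,
          (σ ∩ G) \ (M.closure ((S.filter fun H => H ⊂ G).sup id)) ∈
            famContractBases (M.restrictBases G)
              (M.closure ((S.filter fun H => H ⊂ G).sup id))) := by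
  intro σ hσ
  subst hw
  have hσi : M.Indep σ := ⟨σ, hσ, subset_rfl⟩
  obtain ⟨τ, hτ, hτS⟩ := hS.exists_mem_bases_forall_card_inter_eq_rk hM h𝓖 htop
  rw [M.isMaxBasis_iff_forall_card_inter_eq_rk hc
    ⟨τ, hτ, fun G hG => hτS G (Finset.mem_of_mem_erase hG)⟩ hσ]
  have hσuniv : (σ ∩ Finset.univ).card = M.rk Finset.univ := by
    rw [Finset.inter_univ, M.card_bases σ hσ, M.rk_univ]
  have herase : (∀ G ∈ S.erase Finset.univ, (σ ∩ G).card = M.rk G) ↔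
      ∀ G ∈ S, (σ ∩ G).card = M.rk G :=
    ⟨fun h G hG => (eq_or_ne G Finset.univ).elim (· ▸ hσuniv)
      fun hGu => h G (Finset.mem_erase.2 ⟨hGu, hG⟩),
      fun h G hG => h G (Finset.mem_of_mem_erase hG)⟩
  refine herase.trans (forall_mem_congr_of_ssubset fun G hG hbelow => ?_)
  refine (M.inter_sdiff_mem_famContractBases_iff hσi ?_
    (hS.card_inter_closure_eq_rk hM h𝓖 hσi hbelow)).symm
  exact M.closure_subset_of_isFlat (hS.isFlat h𝓖 hG)
    (Finset.sup_le fun H hH => (Finset.mem_filter.1 hH).2.1)
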